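/- arXiv:0907.4479 — 4 statements merged into one kernel-verified Lean document; each statement's English description precedes it below -/
import Mathlib

section
/- Let (X,d) be a metric space and γ : [0,1] → X a continuous curve. If γ is not absolutely continuous with an L² metric majorant (i.e. γ ∉ AC²([0,1],X)), then the energy H(γ) = sup over partitions of (1/2) Σ d²(γ(tᵢ),γ(t_{i+1}))/(t_{i+1}−tᵢ) equals +∞. -/
open MeasureTheory intervalIntegral ENNReal

/-- The energy of a curve: supremum over all partitions of the discrete energy. -/
noncomputable def curveEnergy {X : Type*} [MetricSpace X] (γ : ℝ → X) : ℝ≥0∞ :=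
  ⨆ (n : ℕ) (t : Fin (n + 1) → ℝ)
    (_ : StrictMono t ∧ t 0 = 0 ∧ t (Fin.last n) = 1),
      ENNReal.ofReal ((1 / 2) * ∑ i : Fin n,
        dist (γ (t i.castSucc)) (γ (t i.succ)) ^ 2 / (t i.succ - t i.castSucc))

/-!
If `H(γ) < ∞`, a partition `0 = t₀ < ⋯ < tₙ = 1` yields the step function with value
`d(γ tᵢ, γ tᵢ₊₁) / (tᵢ₊₁ - tᵢ)` on `(tᵢ, tᵢ₊₁]`. By the triangle inequality its integral over
`[tⱼ, tₖ]` dominates `d(γ tⱼ, γ tₖ)`, and its squared `L²` norm is the discrete energy, at most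
`2 H(γ)`. All these step functions lie in one closed ball of `L²(0, 1)`, which is weakly compact;
since any finitely many pairs `s ≤ t` occur in a common partition, the constraints
`d(γ s, γ t) ≤ ∫ₛᵗ g` have the finite intersection property there, and a common solution `m` exists.
-/

open Set InnerProductSpace

theorem exists_forall_le_inner_of_forall_finset {ι E : Type*} [NormedAddCommGroup E]
    [InnerProductSpace ℝ E] [CompleteSpace E] (χ : ι → E) (c : ι → ℝ) (R : ℝ)
    (h : ∀ u : Finset ι, ∃ g : E, ‖g‖ ≤ R ∧ ∀ i ∈ u, c i ≤ ⟪χ i, g⟫_ℝ) :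
    ∃ F : E, ∀ i, c i ≤ ⟪χ i, F⟫_ℝ := by
  have hball := WeakDual.isCompact_closedBall (𝕜 := ℝ) (0 : StrongDual ℝ E) R
  obtain ⟨φ, -, hφ⟩ := hball.inter_iInter_nonempty (fun i => {φ : WeakDual ℝ E | c i ≤ φ (χ i)})
    (fun i => isClosed_le continuous_const (WeakDual.eval_continuous _)) fun u => by
      obtain ⟨g, hgR, hgu⟩ := h u
      refine ⟨StrongDual.toWeakDual (toDual ℝ E g), ?_, mem_iInter₂.2 fun i hi => ?_⟩
      · simpa using hgR
      · simpa [real_inner_comm] using hgu i hi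
  refine ⟨(toDual ℝ E).symm (WeakDual.toStrongDual φ), fun i => ?_⟩
  rw [real_inner_comm, toDual_symm_apply]
  exact mem_iInter.1 hφ i

theorem setIntegral_Icc_restrict_Icc (f : ℝ → ℝ) {a b s t : ℝ} (has : a ≤ s) (hst : s ≤ t)
    (htb : t ≤ b) : ∫ x in Icc s t, f x ∂volume.restrict (Icc a b) = ∫ x in s..t, f x := by
  rw [Measure.restrict_restrict measurableSet_Icc, inter_eq_left.2 (Icc_subset_Icc has htb),
    integral_Icc_eq_integral_Ioc, integral_of_le hst]

theorem MeasureTheory.MemLp.norm_toLp_sq {α : Type*} [MeasurableSpace α] {μ : Measure α}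
    {g : α → ℝ} (hg : MemLp g 2 μ) : ‖hg.toLp g‖ ^ 2 = ∫ x, g x ^ 2 ∂μ := by
  rw [← real_inner_self_eq_norm_sq, L2.inner_def]
  refine integral_congr_ae ?_
  filter_upwards [hg.coeFn_toLp] with x hx
  rw [hx, real_inner_self_eq_norm_sq, Real.norm_eq_abs, sq_abs]

/-- Half-open on the left, so that each piece is exactly the `Ι (t i) (t (i + 1))` of an interval
integral. -/
noncomputable def partitionStep (t : ℕ → ℝ) (n : ℕ) (v : ℕ → ℝ) : ℝ → ℝ :=
  ∑ i ∈ Finset.range n, (Ioc (t i) (t (i + 1))).indicator fun _ => v i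

section partitionStep

variable {t : ℕ → ℝ} {n : ℕ} (v : ℕ → ℝ)

theorem memLp_partitionStep (p : ℝ≥0∞) : MemLp (partitionStep t n v) p :=
  memLp_finsetSum' _ fun _ _ =>
    memLp_indicator_const p measurableSet_Ioc _ (Or.inr measure_Ioc_lt_top.ne)

theorem partitionStep_eq_of_mem (ht : Monotone t) {i : ℕ} {x : ℝ} (hi : i < n)
    (hx : x ∈ Ioc (t i) (t (i + 1))) : partitionStep t n v x = v i := by
  rw [partitionStep, Finset.sum_apply, Finset.sum_eq_single_of_mem i (Finset.mem_range.2 hi)]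
  · exact indicator_of_mem hx _
  · exact fun j _ hji => indicator_of_notMem
      (fun hxj => disjoint_left.1 (ht.pairwise_disjoint_on_Ioc_succ hji) hxj hx) _

theorem integral_comp_partitionStep (ht : Monotone t) (f : ℝ → ℝ) {j k : ℕ} (hjk : j ≤ k)
    (hkn : k ≤ n) : ∫ x in t j..t k, f (partitionStep t n v x)
      = ∑ i ∈ Finset.Ico j k, f (v i) * (t (i + 1) - t i) := by
  have hconst : ∀ i ∈ Ico j k,
      EqOn (fun x => f (partitionStep t n v x)) (fun _ => f (v i)) (Ioc (t i) (t (i + 1))) :=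
    fun i hi x hx => congrArg f (partitionStep_eq_of_mem v ht (hi.2.trans_le hkn) hx)
  rw [← sum_integral_adjacent_intervals_Ico hjk]
  · refine Finset.sum_congr rfl fun i hi => ?_
    rw [integral_congr_ae (Filter.Eventually.of_forall fun x hx =>
        hconst i (Finset.coe_Ico j k ▸ hi) (uIoc_of_le (ht i.le_succ) ▸ hx)),
      intervalIntegral.integral_const, smul_eq_mul, mul_comm]
  · intro i hi
    rw [intervalIntegrable_iff_integrableOn_Ioc_of_le (ht i.le_succ)]
    exact (integrableOn_const measure_Ioc_lt_top.ne).congr_fun (hconst i hi).symm measurableSet_Ioc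

end partitionStep

theorem exists_partition_superset (P : Finset ℝ) (hP : ↑P ⊆ Icc (0 : ℝ) 1) :
    ∃ (n : ℕ) (t : ℕ → ℝ), Monotone t ∧ (∀ i < n, t i < t (i + 1)) ∧ t 0 = 0 ∧ t n = 1 ∧
      ∀ p ∈ P, ∃ j ≤ n, t j = p := by
  set Q := insert 0 (insert 1 P)
  have hQ : ↑Q ⊆ Icc (0 : ℝ) 1 := by
    simpa [Q, insert_subset_iff] using hP
  obtain ⟨n, hn⟩ : ∃ n, Q.card = n + 1 :=
    Nat.exists_eq_add_one.2 (Finset.card_pos.2 ⟨0, Finset.mem_insert_self _ _⟩)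
  set e := Q.orderEmbOfFin hn
  refine ⟨n, fun i => e (Fin.clamp i n), fun i j hij => e.monotone ?_, fun i hi => e.strictMono ?_,
    ?_, ?_, fun p hp => ?_⟩
  · simp [Fin.clamp, Fin.le_def, hij]
  · simp [Fin.clamp, Fin.lt_def, hi.le, Nat.succ_le_of_lt hi]
  · have hmin : e ⟨0, n.succ_pos⟩ = Q.min' _ := Finset.orderEmbOfFin_zero hn n.succ_pos
    exact hmin.trans (le_antisymm (Q.min'_le 0 (Finset.mem_insert_self _ _)) (hQ (Q.min'_mem _)).1)
  · have hmax : e ⟨n, n.lt_succ_self⟩ = Q.max' _ := Finset.orderEmbOfFin_last hn n.succ_pos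
    simp only [Fin.clamp, min_self]
    exact hmax.trans (le_antisymm (hQ (Q.max'_mem _)).2
      (Q.le_max' 1 (Finset.mem_insert_of_mem (Finset.mem_insert_self _ _))))
  · obtain ⟨j, hj⟩ : p ∈ range e := by
      rw [Finset.range_orderEmbOfFin]
      exact Finset.mem_insert_of_mem (Finset.mem_insert_of_mem hp)
    exact ⟨j, j.is_le, by simpa [Fin.clamp, j.is_le] using hj⟩

section curve

variable {X : Type*} [MetricSpace X] (γ : ℝ → X)

noncomputable def chordSpeed (t : ℕ → ℝ) (i : ℕ) : ℝ :=
  dist (γ (t i)) (γ (t (i + 1))) / (t (i + 1) - t i)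

variable {t : ℕ → ℝ} {n : ℕ}

theorem ofReal_half_sum_le_curveEnergy (hlt : ∀ i < n, t i < t (i + 1)) (h0 : t 0 = 0)
    (h1 : t n = 1) : ENNReal.ofReal ((1 / 2) * ∑ i ∈ Finset.range n,
      dist (γ (t i)) (γ (t (i + 1))) ^ 2 / (t (i + 1) - t i)) ≤ curveEnergy γ := by
  refine le_iSup₂_of_le n (fun i : Fin (n + 1) => t i)
    (le_iSup_of_le ⟨Fin.strictMono_iff_lt_succ.2 fun i => hlt i i.isLt, h0, h1⟩ ?_)
  rw [← Fin.sum_univ_eq_sum_range]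
  rfl

theorem dist_le_integral_partitionStep_chordSpeed (ht : Monotone t)
    (hlt : ∀ i < n, t i < t (i + 1)) {j k : ℕ} (hkn : k ≤ n) (hjk : t j ≤ t k) :
    dist (γ (t j)) (γ (t k)) ≤ ∫ x in t j..t k, partitionStep t n (chordSpeed γ t) x := by
  rcases le_total j k with h | h
  · calc dist (γ (t j)) (γ (t k))
        ≤ ∑ i ∈ Finset.Ico j k, dist (γ (t i)) (γ (t (i + 1))) := dist_le_Ico_sum_dist (γ ∘ t) h
      _ = ∑ i ∈ Finset.Ico j k, chordSpeed γ t i * (t (i + 1) - t i) :=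
        Finset.sum_congr rfl fun i hi => (div_mul_cancel₀ _
          (sub_pos.2 (hlt i ((Finset.mem_Ico.1 hi).2.trans_le hkn))).ne').symm
      _ = _ := (integral_comp_partitionStep _ ht id h hkn).symm
  · rw [le_antisymm hjk (ht h), dist_self, integral_same]

theorem integral_sq_partitionStep_chordSpeed (ht : Monotone t)
    (hlt : ∀ i < n, t i < t (i + 1)) :
    ∫ x in t 0..t n, partitionStep t n (chordSpeed γ t) x ^ 2
      = ∑ i ∈ Finset.range n, dist (γ (t i)) (γ (t (i + 1))) ^ 2 / (t (i + 1) - t i) := by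
  rw [integral_comp_partitionStep _ ht (· ^ 2) n.zero_le le_rfl, Finset.range_eq_Ico]
  refine Finset.sum_congr rfl fun i hi => ?_
  have := (sub_pos.2 (hlt i (Finset.mem_Ico.1 hi).2)).ne'
  rw [chordSpeed, div_pow]
  field_simp

theorem exists_memLp_forall_dist_le_integral_of_finset (hE : curveEnergy γ ≠ ⊤) (P : Finset ℝ)
    (hP : ↑P ⊆ Icc (0 : ℝ) 1) :
    ∃ g : ℝ → ℝ, MemLp g 2 (volume.restrict (Icc 0 1)) ∧
      ∫ x in Icc (0 : ℝ) 1, g x ^ 2 ≤ 2 * (curveEnergy γ).toReal ∧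
      ∀ s ∈ P, ∀ s' ∈ P, s ≤ s' → dist (γ s) (γ s') ≤ ∫ x in s..s', g x := by
  obtain ⟨n, t, ht, hlt, h0, h1, hP⟩ := exists_partition_superset P hP
  refine ⟨partitionStep t n (chordSpeed γ t), (memLp_partitionStep _ 2).restrict _, ?_, ?_⟩
  · have hsum := ofReal_half_sum_le_curveEnergy γ hlt h0 h1
    rw [integral_Icc_eq_integral_Ioc, ← integral_of_le zero_le_one, ← h0, ← h1,
      integral_sq_partitionStep_chordSpeed γ ht hlt]
    linarith [(ofReal_le_iff_le_toReal hE).1 hsum]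
  · intro s hs s' hs' hss'
    obtain ⟨j, -, rfl⟩ := hP s hs
    obtain ⟨k, hkn, rfl⟩ := hP s' hs'
    exact dist_le_integral_partitionStep_chordSpeed γ ht hlt hkn hss'

theorem exists_memLp_forall_dist_le_integral_of_curveEnergy_ne_top (hE : curveEnergy γ ≠ ⊤) :
    ∃ m : ℝ → ℝ, MemLp m 2 (volume.restrict (Icc (0 : ℝ) 1)) ∧
      ∀ s t : ℝ, 0 ≤ s → s ≤ t → t ≤ 1 → dist (γ s) (γ t) ≤ ∫ r in s..t, m r := by
  let ι := {p : ℝ × ℝ // 0 ≤ p.1 ∧ p.1 ≤ p.2 ∧ p.2 ≤ 1}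
  let χ : ι → Lp ℝ 2 (volume.restrict (Icc (0 : ℝ) 1)) := fun p =>
    indicatorConstLp 2 measurableSet_Icc (measure_ne_top _ (Icc p.1.1 p.1.2)) 1
  have hχ (p : ι) (F : Lp ℝ 2 (volume.restrict (Icc (0 : ℝ) 1))) (g : ℝ → ℝ)
      (hFg : F =ᵐ[volume.restrict (Icc 0 1)] g) : ⟪χ p, F⟫_ℝ = ∫ x in p.1.1..p.1.2, g x := by
    rw [L2.inner_indicatorConstLp_one, integral_congr_ae (ae_restrict_of_ae hFg),
      setIntegral_Icc_restrict_Icc _ p.2.1 p.2.2.1 p.2.2.2]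
  obtain ⟨F, hF⟩ := exists_forall_le_inner_of_forall_finset χ (fun p => dist (γ p.1.1) (γ p.1.2))
    √(2 * (curveEnergy γ).toReal) fun u => by
      obtain ⟨g, hg, hg2, hgP⟩ := exists_memLp_forall_dist_le_integral_of_finset γ hE
        (u.image (·.1.1) ∪ u.image (·.1.2)) (by
          intro x hx
          simp only [Finset.coe_union, Finset.coe_image, mem_union, mem_image] at hx
          rcases hx with ⟨p, -, rfl⟩ | ⟨p, -, rfl⟩
          · exact ⟨p.2.1, p.2.2.1.trans p.2.2.2⟩
          · exact ⟨p.2.1.trans p.2.2.1, p.2.2.2⟩)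
      refine ⟨hg.toLp g, ?_, fun p hp => ?_⟩
      · rwa [Real.le_sqrt (norm_nonneg _) (by positivity), hg.norm_toLp_sq]
      · rw [hχ p _ g hg.coeFn_toLp]
        exact hgP _ (Finset.mem_union_left _ (Finset.mem_image_of_mem _ hp))
          _ (Finset.mem_union_right _ (Finset.mem_image_of_mem _ hp)) p.2.2.1
  exact ⟨F, Lp.memLp F, fun s t hs hst ht => (hF ⟨(s, t), hs, hst, ht⟩).trans_eq (hχ _ F F .rfl)⟩

end curve

theorem energy_eq_top_of_not_AC2_general
    {X : Type*} [MetricSpace X] (γ : ℝ → X)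
    (hnotAC : ¬ ∃ m : ℝ → ℝ, MemLp m 2 (volume.restrict (Set.Icc (0 : ℝ) 1)) ∧
      ∀ s t : ℝ, 0 ≤ s → s ≤ t → t ≤ 1 → dist (γ s) (γ t) ≤ ∫ r in s..t, m r) :
    curveEnergy γ = ⊤ := by
  by_contra hE
  exact hnotAC (exists_memLp_forall_dist_le_integral_of_curveEnergy_ne_top γ hE)

theorem energy_eq_top_of_not_AC2
    {X : Type*} [MetricSpace X] (γ : ℝ → X)
    (hcont : ContinuousOn γ (Set.Icc (0 : ℝ) 1))
    (hnotAC : ¬ ∃ m : ℝ → ℝ, MemLp m 2 (volume.restrict (Set.Icc (0 : ℝ) 1)) ∧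
      ∀ s t : ℝ, 0 ≤ s → s ≤ t → t ≤ 1 → dist (γ s) (γ t) ≤ ∫ r in s..t, m r) :
    curveEnergy γ = ⊤ :=
  energy_eq_top_of_not_AC2_general γ hnotAC
end

section
/- Let (X,d) be a metric space and γ ∈ AC²([0,1],X) with metric derivative |γ̇|. Then H(γ) = H̃(γ), where H(γ) is the supremum over all finite partitions Δ = {0=t₀<…<tₙ=1} of (1/2)Σ_i d²(γ(tᵢ),γ(t_{i+1}))/(t_{i+1}−tᵢ), and H̃(γ) = (1/2)∫₀¹ |γ̇|(r)² dr. -/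
open MeasureTheory intervalIntegral ENNReal Filter

/-!
The bound `curveEnergy γ ≤ ½ ∫ γ'²` holds partition by partition: by the majorant and
Cauchy–Schwarz, `d(γ a, γ b)² / (b - a) ≤ ∫_a^b γ'²` on every interval.

For the reverse bound take `h = 1/(N+1)`. For each `s ∈ (0, h)` the points `s, s + h, …, s + N h`,
completed by `0` and `1`, form a partition, so `∑ₖ (d(γ(s + k h), γ(s + k h + h)) / h)²` is at
most `2 curveEnergy γ / h`. Averaging over `s` gives
`∫_0^{1-h} (d(γ t, γ(t + h)) / h)² dt ≤ 2 curveEnergy γ`; the integrands tend to `γ'²` almost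
everywhere, and Fatou's lemma concludes.
-/

open Set Topology

lemma sq_lintegral_le_lintegral_sq_mul_measure_univ {α : Type*} [MeasurableSpace α]
    (ν : Measure α) {f : α → ℝ≥0∞} (hf : AEMeasurable f ν) :
    (∫⁻ a, f a ∂ν) ^ 2 ≤ (∫⁻ a, f a ^ 2 ∂ν) * ν univ := by
  have hCS := ENNReal.lintegral_mul_le_Lp_mul_Lq ν Real.HolderConjugate.two_two hf
    aemeasurable_const (g := fun _ => 1)
  have hsqrt_sq : ∀ x : ℝ≥0∞, (x ^ (1 / 2 : ℝ)) ^ 2 = x := fun x => by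
    rw [← ENNReal.rpow_natCast, ← ENNReal.rpow_mul]; norm_num
  simp only [Pi.mul_apply, mul_one, ENNReal.one_rpow, lintegral_const, one_mul] at hCS
  calc (∫⁻ a, f a ∂ν) ^ 2
      ≤ ((∫⁻ a, f a ^ (2 : ℝ) ∂ν) ^ (1 / 2 : ℝ) * ν univ ^ (1 / 2 : ℝ)) ^ 2 := by gcongr
    _ = (∫⁻ a, f a ^ 2 ∂ν) * ν univ := by
      simp only [mul_pow, hsqrt_sq, ENNReal.rpow_two]

lemma ofReal_sq_div_le_setLIntegral_sq {f : ℝ → ℝ} {a b x : ℝ} (hf : ∀ r, 0 ≤ f r)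
    (hfi : IntegrableOn f (Ioc a b)) (hab : a < b) (hx : 0 ≤ x)
    (hxf : x ≤ ∫ r in a..b, f r) :
    ENNReal.ofReal (x ^ 2 / (b - a)) ≤ ∫⁻ r in Ioc a b, ENNReal.ofReal (f r ^ 2) := by
  have hba : 0 < b - a := sub_pos.2 hab
  have hx' : ENNReal.ofReal x ≤ ∫⁻ r in Ioc a b, ENNReal.ofReal (f r) := by
    rw [← ofReal_integral_eq_lintegral_ofReal hfi (ae_of_all _ hf), ← integral_of_le hab.le]
    exact ENNReal.ofReal_le_ofReal hxf
  have hCS := sq_lintegral_le_lintegral_sq_mul_measure_univ (volume.restrict (Ioc a b))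
    (f := fun r => ENNReal.ofReal (f r)) hfi.aemeasurable.ennreal_ofReal
  rw [Measure.restrict_apply_univ, Real.volume_Ioc] at hCS
  simp only [← ENNReal.ofReal_pow (hf _)] at hCS
  calc ENNReal.ofReal (x ^ 2 / (b - a))
      = ENNReal.ofReal x ^ 2 / ENNReal.ofReal (b - a) := by
        rw [ENNReal.ofReal_div_of_pos hba, ENNReal.ofReal_pow hx]
    _ ≤ (∫⁻ r in Ioc a b, ENNReal.ofReal (f r ^ 2)) * ENNReal.ofReal (b - a)
          / ENNReal.ofReal (b - a) := by gcongr; exact (pow_le_pow_left' hx' 2).trans hCS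
    _ = ∫⁻ r in Ioc a b, ENNReal.ofReal (f r ^ 2) :=
        ENNReal.mul_div_cancel_right (ENNReal.ofReal_pos.2 hba).ne' ENNReal.ofReal_ne_top

lemma sum_setLIntegral_Ioc_le {n : ℕ} {t : Fin (n + 1) → ℝ} (ht : Monotone t) (f : ℝ → ℝ≥0∞) :
    ∑ i : Fin n, ∫⁻ r in Ioc (t i.castSucc) (t i.succ), f r
      ≤ ∫⁻ r in Ioc (t 0) (t (Fin.last n)), f r := by
  induction n with
  | zero => simp
  | succ n ih =>
    have hinit := ih (t := t ∘ Fin.castSucc) (ht.comp Fin.strictMono_castSucc.monotone)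
    rw [Fin.sum_univ_castSucc]
    simp only [Function.comp_apply, Fin.castSucc_zero] at hinit
    simp only [Fin.succ_castSucc, Fin.succ_last]
    calc _ ≤ (∫⁻ r in Ioc (t 0) (t (Fin.last n).castSucc), f r)
          + ∫⁻ r in Ioc (t (Fin.last n).castSucc) (t (Fin.last (n + 1))), f r := by
          gcongr
      _ = ∫⁻ r in Ioc (t 0) (t (Fin.last (n + 1))), f r := by
          rw [← Ioc_union_Ioc_eq_Ioc (ht (Fin.zero_le _)) (ht (Fin.le_last _)),
            lintegral_union measurableSet_Ioc (Ioc_disjoint_Ioc_of_le le_rfl)]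

lemma setLIntegral_Ioc_le_setLIntegral_sum_shift (φ : ℝ → ℝ≥0∞) {a h : ℝ} (hh : 0 ≤ h)
    (N : ℕ) :
    ∫⁻ t in Ioc a (a + N * h), φ t ≤ ∫⁻ s in Ioc a (a + h), ∑ k : Fin N, φ (s + k * h) := by
  induction N with
  | zero => simp
  | succ N ih =>
    have hshift : ∫⁻ t in Ioc (a + N * h) (a + (N + 1 : ℕ) * h), φ t
        = ∫⁻ s in Ioc a (a + h), φ (s + N * h) := by
      rw [← (measurePreserving_add_right volume (N * h)).setLIntegral_comp_preimage_emb
        (measurableEmbedding_addRight _), preimage_add_const_Ioc]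
      congr 3 <;> push_cast <;> ring
    calc ∫⁻ t in Ioc a (a + (N + 1 : ℕ) * h), φ t
        = (∫⁻ t in Ioc a (a + N * h), φ t)
          + ∫⁻ t in Ioc (a + N * h) (a + (N + 1 : ℕ) * h), φ t := by
          rw [← lintegral_union measurableSet_Ioc (Ioc_disjoint_Ioc_of_le le_rfl),
            Ioc_union_Ioc_eq_Ioc (by nlinarith) (by push_cast; nlinarith)]
      _ ≤ (∫⁻ s in Ioc a (a + h), ∑ k : Fin N, φ (s + k * h))
          + ∫⁻ s in Ioc a (a + h), φ (s + N * h) := add_le_add ih hshift.le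
      _ ≤ ∫⁻ s in Ioc a (a + h), ∑ k : Fin (N + 1), φ (s + k * h) := by
          simp only [Fin.sum_univ_castSucc, Fin.val_castSucc, Fin.val_last]
          exact le_lintegral_add _ _

lemma ContinuousWithinAt.of_dist_le {α X Y : Type*} [TopologicalSpace α]
    [PseudoMetricSpace X] [PseudoMetricSpace Y] {f : α → X} {g : α → Y} {s : Set α} {x : α}
    (hg : ContinuousWithinAt g s x) (hfg : ∀ y ∈ s, dist (f y) (f x) ≤ dist (g y) (g x)) :
    ContinuousWithinAt f s x := by
  rw [ContinuousWithinAt, tendsto_iff_dist_tendsto_zero] at hg ⊢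
  exact squeeze_zero' (Eventually.of_forall fun _ => dist_nonneg)
    (eventually_nhdsWithin_of_forall hfg) hg

section Curve

variable {X : Type*} [MetricSpace X] {γ : ℝ → X} {γ' : ℝ → ℝ}

noncomputable def discreteEnergy (γ : ℝ → X) {n : ℕ} (t : Fin (n + 1) → ℝ) : ℝ :=
  ∑ i : Fin n, dist (γ (t i.castSucc)) (γ (t i.succ)) ^ 2 / (t i.succ - t i.castSucc)

lemma discreteEnergy_cons {n : ℕ} (a : ℝ) (t : Fin (n + 1) → ℝ) :
    discreteEnergy γ (Fin.cons a t : Fin (n + 2) → ℝ)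
      = dist (γ a) (γ (t 0)) ^ 2 / (t 0 - a) + discreteEnergy γ t := by
  simp [discreteEnergy, Fin.sum_univ_succ]

lemma discreteEnergy_snoc {n : ℕ} (t : Fin (n + 1) → ℝ) (b : ℝ) :
    discreteEnergy γ (Fin.snoc t b : Fin (n + 2) → ℝ)
      = discreteEnergy γ t + dist (γ (t (Fin.last n))) (γ b) ^ 2 / (b - t (Fin.last n)) := by
  simp [discreteEnergy, Fin.sum_univ_castSucc, Fin.succ_castSucc, -Fin.castSucc_succ]

lemma ofReal_discreteEnergy_le_two_mul_curveEnergy {n : ℕ} {t : Fin (n + 1) → ℝ}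
    (ht : StrictMono t) (h0 : 0 < t 0) (h1 : t (Fin.last n) < 1) :
    ENNReal.ofReal (discreteEnergy γ t) ≤ 2 * curveEnergy γ := by
  set u : Fin (n + 3) → ℝ := Fin.cons 0 (Fin.snoc t 1)
  have hsnoc : StrictMono (Fin.snoc t 1 : Fin (n + 2) → ℝ) := by
    refine Fin.strictMono_iff_lt_succ.2 fun i => ?_
    induction i using Fin.lastCases with
    | last => simpa [Fin.succ_last] using h1
    | cast j => simpa [Fin.succ_castSucc, -Fin.castSucc_succ] using ht j.castSucc_lt_succ
  have hsnoc_pos : ∀ j, 0 < (Fin.snoc t 1 : Fin (n + 2) → ℝ) j := fun j =>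
    h0.trans_le (by simpa using hsnoc.monotone (Fin.zero_le j))
  have hu : StrictMono u := Fin.strictMono_cons.2 ⟨hsnoc_pos, hsnoc⟩
  have hpartition : ENNReal.ofReal (1 / 2 * discreteEnergy γ u) ≤ curveEnergy γ :=
    le_iSup_of_le (n + 2) <| le_iSup_of_le u <| le_iSup_of_le ⟨hu, rfl, by simp [u]⟩ le_rfl
  have hle : discreteEnergy γ t ≤ discreteEnergy γ u := by
    rw [discreteEnergy_cons, discreteEnergy_snoc]
    have hfirst := div_nonneg (sq_nonneg (dist (γ 0) (γ ((Fin.snoc t 1 : Fin (n + 2) → ℝ) 0))))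
      (sub_nonneg.2 (hsnoc_pos 0).le)
    have hlast := div_nonneg (sq_nonneg (dist (γ (t (Fin.last n))) (γ 1))) (sub_nonneg.2 h1.le)
    linarith
  calc ENNReal.ofReal (discreteEnergy γ t) ≤ 2 * ENNReal.ofReal (1 / 2 * discreteEnergy γ u) := by
        rw [← ENNReal.ofReal_ofNat 2, ← ENNReal.ofReal_mul zero_le_two]
        exact ENNReal.ofReal_le_ofReal (by linarith)
    _ ≤ 2 * curveEnergy γ := by gcongr

lemma ofReal_discreteEnergy_le_setLIntegral {a b : ℝ} (hnn : ∀ r, 0 ≤ γ' r)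
    (hint : IntegrableOn γ' (Icc a b))
    (hmaj : ∀ s t, a ≤ s → s ≤ t → t ≤ b → dist (γ s) (γ t) ≤ ∫ r in s..t, γ' r)
    {n : ℕ} {t : Fin (n + 1) → ℝ} (ht : StrictMono t) (h0 : t 0 = a) (h1 : t (Fin.last n) = b) :
    ENNReal.ofReal (discreteEnergy γ t) ≤ ∫⁻ r in Ioc a b, ENNReal.ofReal (γ' r ^ 2) := by
  have hlt (i : Fin n) : t i.castSucc < t i.succ := ht Fin.castSucc_lt_succ
  have ha (i : Fin n) : a ≤ t i.castSucc := h0 ▸ ht.monotone (Fin.zero_le _)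
  have hb (i : Fin n) : t i.succ ≤ b := h1 ▸ ht.monotone (Fin.le_last _)
  rw [discreteEnergy, ENNReal.ofReal_sum_of_nonneg fun i _ =>
    div_nonneg (sq_nonneg _) (sub_pos.2 (hlt i)).le]
  calc ∑ i : Fin n, ENNReal.ofReal
        (dist (γ (t i.castSucc)) (γ (t i.succ)) ^ 2 / (t i.succ - t i.castSucc))
      ≤ ∑ i : Fin n, ∫⁻ r in Ioc (t i.castSucc) (t i.succ), ENNReal.ofReal (γ' r ^ 2) :=
        Finset.sum_le_sum fun i _ => ofReal_sq_div_le_setLIntegral_sq hnn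
          (hint.mono_set (Ioc_subset_Icc_self.trans (Icc_subset_Icc (ha i) (hb i)))) (hlt i)
          dist_nonneg (hmaj _ _ (ha i) (hlt i).le (hb i))
    _ ≤ ∫⁻ r in Ioc a b, ENNReal.ofReal (γ' r ^ 2) :=
        h0 ▸ h1 ▸ sum_setLIntegral_Ioc_le ht.monotone _

lemma curveEnergy_le_half_mul_lintegral (hnn : ∀ r, 0 ≤ γ' r)
    (hint : IntegrableOn γ' (Icc 0 1))
    (hmaj : ∀ s t, 0 ≤ s → s ≤ t → t ≤ 1 → dist (γ s) (γ t) ≤ ∫ r in s..t, γ' r) :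
    curveEnergy γ ≤ ENNReal.ofReal (1 / 2) * ∫⁻ r in Ioc 0 1, ENNReal.ofReal (γ' r ^ 2) :=
  iSup₂_le fun _ _ => iSup_le fun ⟨ht, h0, h1⟩ => by
    rw [ENNReal.ofReal_mul (by norm_num)]
    exact mul_le_mul_right (ofReal_discreteEnergy_le_setLIntegral hnn hint hmaj ht h0 h1) _

lemma continuousOn_of_dist_le_intervalIntegral {a b : ℝ} (hint : IntegrableOn γ' (Icc a b))
    (hmaj : ∀ s t, a ≤ s → s ≤ t → t ≤ b → dist (γ s) (γ t) ≤ ∫ r in s..t, γ' r) :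
    ContinuousOn γ (Icc a b) := by
  rcases lt_or_ge b a with hba | hab
  · simp [Icc_eq_empty_of_lt hba]
  set Φ : ℝ → ℝ := fun u => ∫ r in a..u, γ' r
  have hΦ : ContinuousOn Φ (Icc a b) := by
    rw [← uIcc_of_le hab] at hint ⊢
    exact intervalIntegral.continuousOn_primitive_interval hint
  have hii {u : ℝ} (hu : u ∈ Icc a b) : IntervalIntegrable γ' volume a u :=
    (hint.mono_set (by rw [uIcc_of_le hu.1]; exact Icc_subset_Icc le_rfl hu.2)).intervalIntegrable
  have hmono {s u : ℝ} (hs : s ∈ Icc a b) (hu : u ∈ Icc a b) (hsu : s ≤ u) :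
      dist (γ s) (γ u) ≤ dist (Φ s) (Φ u) := by
    refine (hmaj s u hs.1 hsu hu.2).trans ?_
    rw [← intervalIntegral.integral_interval_sub_left (hii hu) (hii hs), Real.dist_eq,
      abs_sub_comm]
    exact le_abs_self _
  refine fun x hx => (hΦ x hx).of_dist_le fun y hy => ?_
  rcases le_total y x with hyx | hxy
  · exact hmono hy hx hyx
  · rw [dist_comm, dist_comm (Φ y)]; exact hmono hx hy hxy

lemma sum_ofReal_dist_div_sq_le {N : ℕ} {s h : ℝ} (hs : 0 < s) (hh : 0 < h)
    (hsN : s + N * h < 1) :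
    ∑ k : Fin N, ENNReal.ofReal ((dist (γ (s + k * h)) (γ (s + k * h + h)) / h) ^ 2)
      ≤ ENNReal.ofReal h⁻¹ * (2 * curveEnergy γ) := by
  set t : Fin (N + 1) → ℝ := fun k => s + k * h
  have ht : StrictMono t := fun i j hij => by
    simp only [t]; gcongr; exact_mod_cast hij
  have hE : discreteEnergy γ t
      = ∑ k : Fin N, dist (γ (s + k * h)) (γ (s + k * h + h)) ^ 2 / h := by
    refine Finset.sum_congr rfl fun k _ => ?_
    simp only [t, Fin.val_castSucc, Fin.val_succ]
    push_cast
    ring_nf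
  calc ∑ k : Fin N, ENNReal.ofReal ((dist (γ (s + k * h)) (γ (s + k * h + h)) / h) ^ 2)
      = ENNReal.ofReal h⁻¹ * ENNReal.ofReal (discreteEnergy γ t) := by
        rw [← ENNReal.ofReal_mul (inv_nonneg.2 hh.le), hE, Finset.mul_sum,
          ENNReal.ofReal_sum_of_nonneg fun k _ => by positivity]
        refine Finset.sum_congr rfl fun k _ => ?_
        congr 1
        ring
    _ ≤ ENNReal.ofReal h⁻¹ * (2 * curveEnergy γ) := by
        gcongr
        exact ofReal_discreteEnergy_le_two_mul_curveEnergy ht (by simpa [t] using hs)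
          (by simpa [t] using hsN)

lemma setLIntegral_ofReal_dist_div_sq_le {N : ℕ} {h : ℝ} (hN : (N + 1) * h = 1) :
    ∫⁻ t in Ioc 0 (1 - h), ENNReal.ofReal ((dist (γ t) (γ (t + h)) / h) ^ 2)
      ≤ 2 * curveEnergy γ := by
  have hh : 0 < h := pos_of_mul_pos_right (hN ▸ one_pos) (by positivity)
  calc ∫⁻ t in Ioc 0 (1 - h), ENNReal.ofReal ((dist (γ t) (γ (t + h)) / h) ^ 2)
      ≤ ∫⁻ s in Ioc 0 (0 + h), ∑ k : Fin N,
          ENNReal.ofReal ((dist (γ (s + k * h)) (γ (s + k * h + h)) / h) ^ 2) := by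
        rw [show 1 - h = 0 + N * h by linarith]
        exact setLIntegral_Ioc_le_setLIntegral_sum_shift _ hh.le N
    _ ≤ ∫⁻ _ in Ioo 0 h, ENNReal.ofReal h⁻¹ * (2 * curveEnergy γ) := by
        rw [zero_add, Measure.restrict_congr_set Ioo_ae_eq_Ioc.symm]
        exact setLIntegral_mono measurable_const fun s hs =>
          sum_ofReal_dist_div_sq_le hs.1 hh (by nlinarith [hs.2])
    _ = 2 * curveEnergy γ := by
        rw [setLIntegral_const, Real.volume_Ioo, sub_zero, mul_right_comm,
          ← ENNReal.ofReal_mul (inv_nonneg.2 hh.le), inv_mul_cancel₀ hh.ne', ENNReal.ofReal_one,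
          one_mul]

lemma tendsto_ofReal_dist_div_sq {t v : ℝ}
    (hγ : Tendsto (fun h => dist (γ t) (γ (t + h)) / |h|) (𝓝[≠] 0) (𝓝 v))
    {u : ℕ → ℝ} (hu : Tendsto u atTop (𝓝[>] 0)) :
    Tendsto (fun N => ENNReal.ofReal ((dist (γ t) (γ (t + u N)) / u N) ^ 2)) atTop
      (𝓝 (ENNReal.ofReal (v ^ 2))) := by
  have hquot := hγ.comp (hu.mono_right (nhdsWithin_mono _ fun _ hx => ne_of_gt hx))
  have hquot' : Tendsto (fun N => dist (γ t) (γ (t + u N)) / u N) atTop (𝓝 v) :=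
    hquot.congr' ((hu.eventually self_mem_nhdsWithin).mono fun N hN => by
      simp [abs_of_pos (show 0 < u N from hN)])
  exact (ENNReal.continuous_ofReal.tendsto _).comp (hquot'.pow 2)

lemma continuousOn_dist_comp_add (hcont : ContinuousOn γ (Icc 0 1)) {h : ℝ} (hh : 0 ≤ h) :
    ContinuousOn (fun t => dist (γ t) (γ (t + h))) (Ioc 0 (1 - h)) := by
  have hleft : ContinuousOn γ (Ioc 0 (1 - h)) :=
    hcont.mono fun t ht => ⟨ht.1.le, by linarith [ht.2]⟩
  have hright : ContinuousOn (fun t => γ (t + h)) (Ioc 0 (1 - h)) :=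
    hcont.comp (continuousOn_id.add continuousOn_const) fun t ht =>
      ⟨by linarith [ht.1], by linarith [ht.2]⟩
  exact continuous_dist.comp_continuousOn (hleft.prodMk hright)

lemma lintegral_sq_le_two_mul_curveEnergy (hcont : ContinuousOn γ (Icc 0 1))
    (hderiv : ∀ᵐ t ∂(volume.restrict (Icc 0 1)),
      Tendsto (fun h => dist (γ t) (γ (t + h)) / |h|) (𝓝[≠] 0) (𝓝 (γ' t))) :
    ∫⁻ r in Ioc 0 1, ENNReal.ofReal (γ' r ^ 2) ≤ 2 * curveEnergy γ := by
  set u : ℕ → ℝ := fun N => ((N : ℝ) + 1)⁻¹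
  have hu : Tendsto u atTop (𝓝[>] 0) := tendsto_inv_atTop_nhdsGT_zero.comp
    (tendsto_natCast_atTop_atTop.atTop_add tendsto_const_nhds)
  set g : ℕ → ℝ → ℝ≥0∞ := fun N => (Ioc 0 (1 - u N)).indicator fun t =>
    ENNReal.ofReal ((dist (γ t) (γ (t + u N)) / u N) ^ 2)
  have hg_meas (N : ℕ) : AEMeasurable (g N) (volume.restrict (Ioo 0 1)) :=
    ((aemeasurable_indicator_iff measurableSet_Ioc).2
      (ENNReal.continuous_ofReal.comp_continuousOn
        (((continuousOn_dist_comp_add hcont (by positivity)).div_const _).pow 2)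
        |>.aemeasurable measurableSet_Ioc)).mono_measure Measure.restrict_le_self
  have hg_lim : ∀ᵐ t ∂(volume.restrict (Ioo 0 1)),
      ENNReal.ofReal (γ' t ^ 2) ≤ liminf (fun N => g N t) atTop := by
    filter_upwards [ae_restrict_of_ae_restrict_of_subset Ioo_subset_Icc_self hderiv,
      ae_restrict_mem measurableSet_Ioo] with t htγ ht
    have hg_eq : ∀ᶠ N in atTop, ENNReal.ofReal ((dist (γ t) (γ (t + u N)) / u N) ^ 2) = g N t :=
      ((hu.mono_right nhdsWithin_le_nhds).eventually_lt_const (sub_pos.2 ht.2)).mono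
        fun N hN => by
          simp only [g, indicator_of_mem (show t ∈ Ioc 0 (1 - u N) from ⟨ht.1, by linarith⟩)]
    exact ((tendsto_ofReal_dist_div_sq htγ hu).congr' hg_eq).liminf_eq.ge
  have hg_int (N : ℕ) : ∫⁻ t, g N t ∂(volume.restrict (Ioo 0 1)) ≤ 2 * curveEnergy γ :=
    calc ∫⁻ t, g N t ∂(volume.restrict (Ioo 0 1)) ≤ ∫⁻ t, g N t :=
          lintegral_mono' Measure.restrict_le_self le_rfl
      _ ≤ 2 * curveEnergy γ := by
          rw [lintegral_indicator measurableSet_Ioc]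
          exact setLIntegral_ofReal_dist_div_sq_le (N := N) (mul_inv_cancel₀ (by positivity))
  calc ∫⁻ r in Ioc 0 1, ENNReal.ofReal (γ' r ^ 2)
      = ∫⁻ r in Ioo 0 1, ENNReal.ofReal (γ' r ^ 2) := by
        rw [Measure.restrict_congr_set Ioo_ae_eq_Ioc]
    _ ≤ ∫⁻ t in Ioo 0 1, liminf (fun N => g N t) atTop := lintegral_mono_ae hg_lim
    _ ≤ liminf (fun N => ∫⁻ t in Ioo 0 1, g N t) atTop := lintegral_liminf_le' hg_meas
    _ ≤ 2 * curveEnergy γ := liminf_le_of_le (by isBoundedDefault) fun b hb =>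
          let ⟨N, hN⟩ := hb.exists; hN.trans (hg_int N)

end Curve

theorem energy_eq_metric_derivative_energy
    {X : Type*} [MetricSpace X] (γ : ℝ → X) (γ' : ℝ → ℝ)
    (hnn : ∀ r, 0 ≤ γ' r)
    (hmem : MemLp γ' 2 (volume.restrict (Set.Icc (0 : ℝ) 1)))
    (hmaj : ∀ s t : ℝ, 0 ≤ s → s ≤ t → t ≤ 1 → dist (γ s) (γ t) ≤ ∫ r in s..t, γ' r)
    (hderiv : ∀ᵐ t ∂(volume.restrict (Set.Icc (0 : ℝ) 1)),
      Tendsto (fun h : ℝ => dist (γ t) (γ (t + h)) / |h|) (nhdsWithin 0 {0}ᶜ) (nhds (γ' t))) :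
    curveEnergy γ = ENNReal.ofReal ((1 / 2) * ∫ r in (0 : ℝ)..1, γ' r ^ 2) := by
  have hint : IntegrableOn γ' (Icc 0 1) := hmem.integrable one_le_two
  have hL : ENNReal.ofReal (∫ r in (0 : ℝ)..1, γ' r ^ 2)
      = ∫⁻ r in Ioc 0 1, ENNReal.ofReal (γ' r ^ 2) := by
    rw [intervalIntegral.integral_of_le zero_le_one, ofReal_integral_eq_lintegral_ofReal
      (IntegrableOn.mono_set hmem.integrable_sq Ioc_subset_Icc_self)
      (ae_of_all _ fun _ => sq_nonneg _)]
  rw [ENNReal.ofReal_mul (by norm_num), hL]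
  refine le_antisymm (curveEnergy_le_half_mul_lintegral hnn hint hmaj) ?_
  calc ENNReal.ofReal (1 / 2) * ∫⁻ r in Ioc 0 1, ENNReal.ofReal (γ' r ^ 2)
      ≤ ENNReal.ofReal (1 / 2) * (2 * curveEnergy γ) := by
        gcongr
        exact lintegral_sq_le_two_mul_curveEnergy
          (continuousOn_of_dist_le_intervalIntegral hint hmaj) hderiv
    _ = curveEnergy γ := by
        rw [← mul_assoc, ← ENNReal.ofReal_ofNat 2, ← ENNReal.ofReal_mul (by norm_num)]
        norm_num
end

section
/- Let ν and μ be finite measures on [0,1] and define E(ν|μ) = ∫₀¹ |dν/dμ|² dμ if ν ≪ μ and +∞ otherwise. If ν_N ⇀ ν and μ_N ⇀ μ weakly and liminf_N E(ν_N|μ_N) ≤ C < ∞, then ν ≪ μ and ν = f·μ with ∫₀¹ f² dμ ≤ C. -/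
/-!
Young's inequality `2ab ≤ a² + b²` gives, for every nonnegative test function `g`, the dual bound
`2 ∫ g dν ≤ E(ν|μ) + ∫ g² dμ`. For bounded continuous `g` both integrals pass to weak limits, so
`2 ∫ g dν ≤ C + ∫ g² dμ`; since bounded continuous functions are dense in `L¹(μ + ν)`, this extends
to bounded measurable `g`. Testing with `g = n · 𝟙ₛ` for a `μ`-null set `s` gives
`ν s ≤ C / (2n)`, hence `ν ≪ μ`. Testing with `g = min (dν/dμ) n`, for which
`∫ g dν = ∫ g · dν/dμ dμ ≥ ∫ g² dμ < ∞`, gives `∫ g² dμ ≤ C`, and monotone convergence concludes.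
-/

open MeasureTheory ENNReal Filter Topology BoundedContinuousFunction
open scoped NNReal

open Classical in
/-- The 2-Dirichlet energy `E(ν|μ) = ∫ |dν/dμ|² dμ` if `ν ≪ μ`, and `∞` otherwise. -/
noncomputable def dirichletEnergy {α : Type*} [MeasurableSpace α] (ν μ : Measure α) : ℝ≥0∞ :=
  if ν ≪ μ then ∫⁻ x, (ν.rnDeriv μ x) ^ 2 ∂μ else ⊤

theorem ENNReal.two_mul_le_add_sq (a b : ℝ≥0∞) : 2 * a * b ≤ a ^ 2 + b ^ 2 := by
  rcases eq_or_ne a ⊤ with rfl | ha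
  · simp
  rcases eq_or_ne b ⊤ with rfl | hb
  · simp
  lift a to ℝ≥0 using ha
  lift b to ℝ≥0 using hb
  exact_mod_cast _root_.two_mul_le_add_sq a b

theorem NNReal.sq_le_sq_add_mul_nndist {a b c : ℝ≥0} (ha : a ≤ c) (hb : b ≤ c) :
    b ^ 2 ≤ a ^ 2 + 2 * c * nndist a b := by
  rw [← NNReal.coe_le_coe]
  push_cast
  rw [NNReal.dist_eq]
  have ha' : (a : ℝ) ≤ c := ha
  have hb' : (b : ℝ) ≤ c := hb
  nlinarith [le_abs_self ((a : ℝ) - b), neg_abs_le ((a : ℝ) - b), a.2, b.2]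

theorem two_mul_lintegral_le_dirichletEnergy_add {α : Type*} [MeasurableSpace α]
    (ν μ : Measure α) [ν.HaveLebesgueDecomposition μ] {g : α → ℝ≥0∞} (hg : Measurable g) :
    2 * ∫⁻ x, g x ∂ν ≤ dirichletEnergy ν μ + ∫⁻ x, g x ^ 2 ∂μ := by
  unfold dirichletEnergy
  split_ifs with hνμ
  · calc 2 * ∫⁻ x, g x ∂ν = ∫⁻ x, 2 * ν.rnDeriv μ x * g x ∂μ := by
          rw [← lintegral_rnDeriv_mul hνμ hg.aemeasurable, ← lintegral_const_mul]
          · simp only [mul_assoc]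
          · exact (ν.measurable_rnDeriv μ).mul hg
      _ ≤ ∫⁻ x, ν.rnDeriv μ x ^ 2 + g x ^ 2 ∂μ :=
          lintegral_mono fun x => ENNReal.two_mul_le_add_sq _ _
      _ = _ := lintegral_add_right _ (hg.pow_const 2)
  · simp

theorem two_mul_lintegral_le_liminf_dirichletEnergy_add {Ω γ : Type*} [TopologicalSpace Ω]
    [MeasurableSpace Ω] [OpensMeasurableSpace Ω] {F : Filter γ} [F.NeBot]
    {ν μ : FiniteMeasure Ω} {νs μs : γ → FiniteMeasure Ω}
    (hν : Tendsto νs F (𝓝 ν)) (hμ : Tendsto μs F (𝓝 μ)) (g : Ω →ᵇ ℝ≥0) :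
    2 * ∫⁻ x, g x ∂(ν : Measure Ω) ≤
      liminf (fun i => dirichletEnergy (νs i : Measure Ω) (μs i)) F +
        ∫⁻ x, (g x : ℝ≥0∞) ^ 2 ∂(μ : Measure Ω) := by
  have hg_sq : ∀ x, (g x : ℝ≥0∞) ^ 2 = (g ^ 2) x := by simp
  simp only [hg_sq]
  have hνg := FiniteMeasure.tendsto_iff_forall_lintegral_tendsto.mp hν g
  have hμg := FiniteMeasure.tendsto_iff_forall_lintegral_tendsto.mp hμ (g ^ 2)
  have hlim := ENNReal.Tendsto.sub (ENNReal.Tendsto.const_mul (a := 2) hνg (.inr ofNat_ne_top))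
    hμg (.inr (lintegral_lt_top_of_nnreal _ _).ne)
  rw [← tsub_le_iff_right, ← hlim.liminf_eq]
  refine liminf_le_liminf (.of_forall fun i => tsub_le_iff_right.2 ?_)
  have := two_mul_lintegral_le_dirichletEnergy_add (νs i : Measure Ω) (μs i)
    (g := fun x => (g x : ℝ≥0∞)) (by fun_prop)
  simpa only [hg_sq] using this

theorem exists_boundedContinuous_le_lintegral_nndist_le {Ω : Type*} [TopologicalSpace Ω]
    [NormalSpace Ω] [MeasurableSpace Ω] [BorelSpace Ω] (ρ : Measure Ω) [IsFiniteMeasure ρ]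
    [ρ.WeaklyRegular] {f : Ω → ℝ≥0} {c : ℝ≥0} (hf : Measurable f) (hfc : ∀ x, f x ≤ c)
    {ε : ℝ≥0∞} (hε : ε ≠ 0) :
    ∃ G : Ω →ᵇ ℝ≥0, (∀ x, G x ≤ c) ∧ ∫⁻ x, nndist (f x) (G x) ∂ρ ≤ ε := by
  have hint : Integrable (fun x => (f x : ℝ)) ρ :=
    .of_bound (by fun_prop) c (ae_of_all _ fun x => by simpa using hfc x)
  obtain ⟨g, hg, -⟩ := hint.exists_boundedContinuous_lintegral_sub_le hε
  -- Clamping to `[0, c]` is 1-Lipschitz and fixes `f`, so it brings `g` no farther from `f`.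
  have hclamp : LipschitzWith 1 fun t : ℝ => (min t c).toNNReal := by
    simpa [Function.comp_def] using
      Real.lipschitzWith_toNNReal.comp (LipschitzWith.id.min_const (c : ℝ))
  refine ⟨g.comp _ hclamp, fun x => Real.toNNReal_le_iff_le_coe.2 (min_le_right _ _),
    hg.trans' (lintegral_mono fun x => ?_)⟩
  have hfix : (min (f x : ℝ) c).toNNReal = f x := by simp [hfc x]
  have := hclamp.nndist_le (f x) (g x)
  rw [hfix, one_mul] at this
  calc (nndist (f x) _ : ℝ≥0∞) ≤ nndist (f x : ℝ) (g x) := by exact_mod_cast this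
    _ = ‖(f x : ℝ) - g x‖ₑ := by rw [← edist_nndist, edist_eq_enorm_sub]

theorem two_mul_lintegral_le_of_forall_boundedContinuous {Ω : Type*} [TopologicalSpace Ω]
    [NormalSpace Ω] [MeasurableSpace Ω] [BorelSpace Ω] {ν μ : Measure Ω} [IsFiniteMeasure ν]
    [IsFiniteMeasure μ] [(μ + ν).WeaklyRegular] {C : ℝ≥0∞}
    (h : ∀ g : Ω →ᵇ ℝ≥0, 2 * ∫⁻ x, g x ∂ν ≤ C + ∫⁻ x, (g x : ℝ≥0∞) ^ 2 ∂μ)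
    {f : Ω → ℝ≥0} {c : ℝ≥0} (hf : Measurable f) (hfc : ∀ x, f x ≤ c) :
    2 * ∫⁻ x, f x ∂ν ≤ C + ∫⁻ x, (f x : ℝ≥0∞) ^ 2 ∂μ := by
  refine ENNReal.le_of_forall_pos_le_add fun ε hε _ => ?_
  set K : ℝ≥0 := 2 * c + 2
  have hK : K ≠ 0 := by positivity
  obtain ⟨G, hGc, hG⟩ := exists_boundedContinuous_le_lintegral_nndist_le (μ + ν) hf hfc
    (ε := (ε / K : ℝ≥0)) (by simpa [hK] using hε.ne')
  set d : Ω → ℝ≥0∞ := fun x => nndist (f x) (G x)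
  have hd : Measurable d := by fun_prop
  have hGm : Measurable fun x => (G x : ℝ≥0∞) := by fun_prop
  rw [lintegral_add_measure] at hG
  have hfν : ∫⁻ x, f x ∂ν ≤ ∫⁻ x, G x ∂ν + ∫⁻ x, d x ∂ν := by
    rw [← lintegral_add_left hGm]
    exact lintegral_mono fun x => by
      simp only [d]
      exact_mod_cast NNReal.le_add_nndist (f x) (G x)
  have hGμ :
      ∫⁻ x, (G x : ℝ≥0∞) ^ 2 ∂μ ≤ ∫⁻ x, (f x : ℝ≥0∞) ^ 2 ∂μ + 2 * c * ∫⁻ x, d x ∂μ := by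
    rw [← lintegral_const_mul _ hd, ← lintegral_add_left (by fun_prop)]
    exact lintegral_mono fun x => by
      simp only [d]
      exact_mod_cast NNReal.sq_le_sq_add_mul_nndist (hfc x) (hGc x)
  calc 2 * ∫⁻ x, f x ∂ν ≤ 2 * ∫⁻ x, G x ∂ν + 2 * ∫⁻ x, d x ∂ν := by
        rw [← mul_add]; gcongr
    _ ≤ C + ∫⁻ x, (f x : ℝ≥0∞) ^ 2 ∂μ + (2 * c * ∫⁻ x, d x ∂μ + 2 * ∫⁻ x, d x ∂ν) := by
        grw [h G, hGμ]; apply le_of_eq; ring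
    _ ≤ C + ∫⁻ x, (f x : ℝ≥0∞) ^ 2 ∂μ + K * (∫⁻ x, d x ∂μ + ∫⁻ x, d x ∂ν) := by
        gcongr
        simp only [K, ENNReal.coe_add, ENNReal.coe_mul, mul_add, add_mul]
        gcongr <;> simp
    _ ≤ C + ∫⁻ x, (f x : ℝ≥0∞) ^ 2 ∂μ + ε := by
        grw [hG]
        rw [← ENNReal.coe_mul, mul_div_cancel₀ _ hK]

section BoundedTestFunctions

variable {α : Type*} [MeasurableSpace α] {ν μ : Measure α} {C : ℝ≥0∞}

theorem absolutelyContinuous_of_two_mul_lintegral_le (hC : C ≠ ⊤)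
    (h : ∀ ⦃f : α → ℝ≥0⦄ ⦃c : ℝ≥0⦄, Measurable f → (∀ x, f x ≤ c) →
      2 * ∫⁻ x, f x ∂ν ≤ C + ∫⁻ x, (f x : ℝ≥0∞) ^ 2 ∂μ) :
    ν ≪ μ := by
  refine Measure.AbsolutelyContinuous.mk fun s hs hμs => ?_
  have hbound : ∀ n : ℕ, n * ν s ≤ C := fun n => by
    have := h (measurable_const.indicator hs) fun _ =>
      Set.indicator_apply_le' (fun _ => le_refl (n : ℝ≥0)) fun _ => zero_le
    have hsq : ∀ x, s.indicator (fun _ => (n : ℝ≥0∞)) x ^ 2 =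
        s.indicator (fun _ => (n : ℝ≥0∞) ^ 2) x := fun x => by
      by_cases hx : x ∈ s <;> simp [hx]
    simp only [ENNReal.coe_indicator, ENNReal.coe_natCast, hsq, lintegral_indicator_const hs,
      hμs, mul_zero, add_zero] at this
    exact (le_mul_of_one_le_left' one_le_two).trans this
  have htop : ⊤ * ν s ≤ C := by
    rw [← ENNReal.iSup_natCast, ENNReal.iSup_mul]
    exact iSup_le hbound
  by_contra hne
  exact hC (top_le_iff.1 (ENNReal.top_mul hne ▸ htop))

theorem lintegral_rnDeriv_sq_le_of_two_mul_lintegral_le [ν.HaveLebesgueDecomposition μ]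
    [IsFiniteMeasure μ] (hνμ : ν ≪ μ)
    (h : ∀ ⦃f : α → ℝ≥0⦄ ⦃c : ℝ≥0⦄, Measurable f → (∀ x, f x ≤ c) →
      2 * ∫⁻ x, f x ∂ν ≤ C + ∫⁻ x, (f x : ℝ≥0∞) ^ 2 ∂μ) :
    ∫⁻ x, ν.rnDeriv μ x ^ 2 ∂μ ≤ C := by
  set f := ν.rnDeriv μ
  have hf : Measurable f := ν.measurable_rnDeriv μ
  have htrunc : ∀ n : ℕ, ∫⁻ x, min (f x) n ^ 2 ∂μ ≤ C := fun n => by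
    have hfin : ∫⁻ x, min (f x) n ^ 2 ∂μ ≠ ⊤ := by
      refine ne_top_of_le_ne_top ?_
        (lintegral_mono fun x => pow_le_pow_left' (min_le_right (f x) n) 2)
      simp [lintegral_const, ENNReal.mul_eq_top]
    have hle : ∫⁻ x, min (f x) n ^ 2 ∂μ ≤ ∫⁻ x, min (f x) n ∂ν := by
      rw [← lintegral_rnDeriv_mul hνμ (by fun_prop)]
      exact lintegral_mono fun x => by rw [sq]; gcongr; exact min_le_left _ _
    have hcoe : ∀ x, ((min (f x) n).toNNReal : ℝ≥0∞) = min (f x) n := fun x =>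
      coe_toNNReal (ne_top_of_le_ne_top (natCast_ne_top n) (min_le_right _ _))
    have := h (f := fun x => (min (f x) n).toNNReal) (c := n) (by fun_prop) fun x => by
      rw [← ENNReal.coe_le_coe, hcoe]; simp
    simp only [hcoe] at this
    refine ENNReal.le_of_add_le_add_right hfin ?_
    rw [← two_mul]
    grw [hle]; exact this
  have hlim : Tendsto (fun n : ℕ => ∫⁻ x, min (f x) n ^ 2 ∂μ) atTop (𝓝 (∫⁻ x, f x ^ 2 ∂μ)) := by
    refine lintegral_tendsto_of_tendsto_of_monotone (fun n => by fun_prop)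
      (ae_of_all _ fun x m n hmn => ?_) (ae_of_all _ fun x => ?_)
    · dsimp only; gcongr
    · simpa using
        ENNReal.Tendsto.pow (tendsto_const_nhds.min ENNReal.tendsto_nat_nhds_top) (n := 2)
  exact le_of_tendsto' hlim htrunc

end BoundedTestFunctions

theorem dirichletEnergy_lsc_weak_limit
    (ν μ : FiniteMeasure (Set.Icc (0 : ℝ) 1))
    (νN μN : ℕ → FiniteMeasure (Set.Icc (0 : ℝ) 1))
    (hν : Tendsto νN atTop (nhds ν)) (hμ : Tendsto μN atTop (nhds μ))
    (C : ℝ≥0∞) (hC : C < ⊤)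
    (hE : liminf (fun N => dirichletEnergy (νN N : Measure (Set.Icc (0 : ℝ) 1))
        (μN N : Measure (Set.Icc (0 : ℝ) 1))) atTop ≤ C) :
    (ν : Measure (Set.Icc (0 : ℝ) 1)) ≪ (μ : Measure (Set.Icc (0 : ℝ) 1)) ∧
      ∫⁻ x, ((ν : Measure (Set.Icc (0 : ℝ) 1)).rnDeriv (μ : Measure (Set.Icc (0 : ℝ) 1)) x) ^ 2
          ∂(μ : Measure (Set.Icc (0 : ℝ) 1)) ≤ C := by
  have hcont := fun g => (two_mul_lintegral_le_liminf_dirichletEnergy_add hν hμ g).trans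
    (add_le_add_left hE _)
  have hbdd := fun (f : Set.Icc (0 : ℝ) 1 → ℝ≥0) (c : ℝ≥0) (hf : Measurable f)
    (hfc : ∀ x, f x ≤ c) => two_mul_lintegral_le_of_forall_boundedContinuous hcont hf hfc
  have hνμ := absolutelyContinuous_of_two_mul_lintegral_le hC.ne hbdd
  exact ⟨hνμ, lintegral_rnDeriv_sq_le_of_two_mul_lintegral_le hνμ hbdd⟩
end

section
/- Let (X,d) be a metric space, γ : [0,1] → X a continuous curve of finite length, and for each N let ν_N = Σ_{i=0}^{N-1} d(γ(i/N),γ((i+1)/N)) · δ_{i/N} be the discrete measure on [0,1]. If ν_N converges weakly (along a subsequence) to a measure ν, then d(γ(s),γ(t)) ≤ ν([s,t]) for all 0 ≤ s ≤ t ≤ 1. -/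
/-!
Fix a bump function `f` with `0 ≤ f ≤ 1`, equal to `1` on `[u, v]` and vanishing off `(s, t)`.
Chaining the triangle inequality over the partition points `i/N` between `u` and `v` bounds
`d(γ(⌈uN⌉/N), γ(⌊vN⌋/N))` by `∫ f dν_N`; letting `N → ∞` gives `d(γ u, γ v) ≤ ∫ f dν ≤ ν([s, t])`,
and letting `u ↓ s`, `v ↑ t` gives the claim.
-/

open MeasureTheory Filter Set Topology BoundedContinuousFunction

noncomputable def partitionMeasure {X : Type*} [PseudoMetricSpace X] (γ : ℝ → X) (N : ℕ) :
    Measure ℝ :=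
  ∑ i : Fin N, ENNReal.ofReal (dist (γ ((i : ℝ) / N)) (γ (((i : ℝ) + 1) / N))) •
    Measure.dirac ((i : ℝ) / N)

section PartitionMeasure

variable {X : Type*} [PseudoMetricSpace X]

theorem dist_le_sum_range_dist_mul {x : ℕ → X} {a b N : ℕ} (hab : a ≤ b) (hbN : b ≤ N)
    {w : ℕ → ℝ} (hw0 : ∀ i, 0 ≤ w i) (hw1 : ∀ i ∈ Finset.Ico a b, w i = 1) :
    dist (x a) (x b) ≤ ∑ i ∈ Finset.range N, dist (x i) (x (i + 1)) * w i :=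
  calc dist (x a) (x b) ≤ ∑ i ∈ Finset.Ico a b, dist (x i) (x (i + 1)) :=
        dist_le_Ico_sum_dist x hab
    _ = ∑ i ∈ Finset.Ico a b, dist (x i) (x (i + 1)) * w i :=
        Finset.sum_congr rfl fun i hi => by rw [hw1 i hi, mul_one]
    _ ≤ ∑ i ∈ Finset.range N, dist (x i) (x (i + 1)) * w i :=
        Finset.sum_le_sum_of_subset_of_nonneg
          (fun i hi => Finset.mem_range.2 ((Finset.mem_Ico.1 hi).2.trans_le hbN))
          fun i _ _ => mul_nonneg dist_nonneg (hw0 i)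

theorem integral_partitionMeasure (γ : ℝ → X) (N : ℕ) (f : ℝ →ᵇ ℝ) :
    ∫ x, f x ∂partitionMeasure γ N =
      ∑ i : Fin N, dist (γ ((i : ℝ) / N)) (γ (((i : ℝ) + 1) / N)) * f ((i : ℝ) / N) := by
  rw [partitionMeasure, integral_finsetSum_measure fun i _ =>
    (f.integrable _).smul_measure ENNReal.ofReal_ne_top]
  refine Finset.sum_congr rfl fun i _ => ?_
  rw [integral_smul_measure, integral_dirac, ENNReal.toReal_ofReal dist_nonneg, smul_eq_mul]

theorem dist_le_integral_partitionMeasure (γ : ℝ → X) {a b N : ℕ} (hab : a ≤ b) (hbN : b ≤ N)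
    {f : ℝ →ᵇ ℝ} (hf0 : 0 ≤ f) (hf1 : ∀ i ∈ Finset.Ico a b, f ((i : ℝ) / N) = 1) :
    dist (γ ((a : ℝ) / N)) (γ ((b : ℝ) / N)) ≤ ∫ x, f x ∂partitionMeasure γ N := by
  rw [integral_partitionMeasure, Fin.sum_univ_eq_sum_range
    (fun i => dist (γ ((i : ℝ) / N)) (γ (((i : ℝ) + 1) / N)) * f ((i : ℝ) / N))]
  simpa only [Nat.cast_succ] using
    dist_le_sum_range_dist_mul (x := fun i => γ ((i : ℝ) / N)) (w := fun i => f ((i : ℝ) / N))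
      hab hbN (fun i => hf0 _) hf1

variable {γ : ℝ → X} {ν : Measure ℝ} {N : ℕ → ℕ}

theorem dist_le_integral_of_tendsto_partitionMeasure (hN : Tendsto N atTop atTop)
    (hweak : ∀ f : ℝ →ᵇ ℝ,
      Tendsto (fun k => ∫ x, f x ∂partitionMeasure γ (N k)) atTop (𝓝 (∫ x, f x ∂ν)))
    {u v : ℝ} (hu : 0 ≤ u) (huv : u < v) (hv : v ≤ 1)
    (hγu : ContinuousAt γ u) (hγv : ContinuousAt γ v)
    {f : ℝ →ᵇ ℝ} (hf0 : 0 ≤ f) (hf1 : EqOn f 1 (Icc u v)) :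
    dist (γ u) (γ v) ≤ ∫ x, f x ∂ν := by
  have hNR : Tendsto (fun k => (N k : ℝ)) atTop atTop := tendsto_natCast_atTop_atTop.comp hN
  have ha := (tendsto_nat_ceil_mul_div_atTop hu).comp hNR
  have hb := (tendsto_nat_floor_mul_div_atTop (hu.trans huv.le)).comp hNR
  refine le_of_tendsto_of_tendsto ((hγu.tendsto.comp ha).dist (hγv.tendsto.comp hb)) (hweak f) ?_
  filter_upwards [ha.eventually_lt hb huv, hNR.eventually_gt_atTop 0] with k hab hNk
  simp only [Function.comp_apply] at hab ⊢
  have hbN : ⌊v * N k⌋₊ ≤ N k := Nat.floor_le_of_le (mul_le_of_le_one_left hNk.le hv)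
  refine dist_le_integral_partitionMeasure γ
    (Nat.cast_le.1 ((div_lt_div_iff_of_pos_right hNk).1 hab).le) hbN hf0 fun i hi => hf1 ⟨?_, ?_⟩
  · rw [le_div_iff₀ hNk]
    exact (Nat.le_ceil _).trans (Nat.cast_le.2 (Finset.mem_Ico.1 hi).1)
  · rw [div_le_iff₀ hNk]
    exact (Nat.cast_le.2 (Finset.mem_Ico.1 hi).2.le).trans (Nat.floor_le (mul_nonneg (hu.trans huv.le) hNk.le))

theorem ofReal_dist_le_measure_Icc_of_tendsto_partitionMeasure (hN : Tendsto N atTop atTop)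
    (hweak : ∀ f : ℝ →ᵇ ℝ,
      Tendsto (fun k => ∫ x, f x ∂partitionMeasure γ (N k)) atTop (𝓝 (∫ x, f x ∂ν)))
    {s u v t : ℝ} (hu : 0 ≤ u) (huv : u < v) (hv : v ≤ 1) (hsu : s < u) (hvt : v < t)
    (hγu : ContinuousAt γ u) (hγv : ContinuousAt γ v) :
    ENNReal.ofReal (dist (γ u) (γ v)) ≤ ν (Icc s t) := by
  have hdisj : Disjoint (Ioo s t)ᶜ (Icc u v) :=
    disjoint_compl_left_iff_subset.2 (Icc_subset_Ioo hsu hvt)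
  obtain ⟨f, hf0, hf1, hf01⟩ :=
    exists_bounded_zero_one_of_closed isOpen_Ioo.isClosed_compl isClosed_Icc hdisj
  calc ENNReal.ofReal (dist (γ u) (γ v)) ≤ ENNReal.ofReal (∫ x, f x ∂ν) :=
        ENNReal.ofReal_le_ofReal <| dist_le_integral_of_tendsto_partitionMeasure hN hweak
          hu huv hv hγu hγv (fun x => (hf01 x).1) hf1
    _ ≤ ν (Icc s t) :=
        integral_le_measure (fun x _ => (hf01 x).2) fun x hx =>
          (hf0 fun h => hx (Ioo_subset_Icc_self h)).le

end PartitionMeasure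

theorem dist_le_weak_limit_of_partition_measures_general
    {X : Type*} [MetricSpace X] (γ : ℝ → X)
    (hcont : ContinuousOn γ (Set.Icc (0 : ℝ) 1))
    (ν : Measure ℝ) (φ : ℕ → ℕ) (hφ : StrictMono φ)
    (hweak : ∀ f : BoundedContinuousFunction ℝ ℝ,
      Tendsto (fun k => ∫ x, f x ∂(∑ i : Fin (φ k),
          ENNReal.ofReal (dist (γ ((i : ℝ) / (φ k))) (γ (((i : ℝ) + 1) / (φ k)))) •
            Measure.dirac ((i : ℝ) / (φ k))))
        atTop (nhds (∫ x, f x ∂ν))) :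
    ∀ s t : ℝ, 0 ≤ s → s ≤ t → t ≤ 1 →
      ENNReal.ofReal (dist (γ s) (γ t)) ≤ ν (Set.Icc s t) := by
  intro s t hs hst ht
  rcases hst.eq_or_lt with rfl | hst
  · simp
  have hγ : ∀ x ∈ Ioo 0 1, ContinuousAt γ x := fun x hx =>
    hcont.continuousAt (Icc_mem_nhds hx.1 hx.2)
  have hδ : (0 : ℝ) ≠ (t - s) / 2 := by linarith
  have hshrunk : ∀ ε ∈ Ioo 0 ((t - s) / 2),
      ENNReal.ofReal (dist (γ (s + ε)) (γ (t - ε))) ≤ ν (Icc s t) := fun ε ⟨hε0, hε⟩ =>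
    ofReal_dist_le_measure_Icc_of_tendsto_partitionMeasure hφ.tendsto_atTop hweak
      (by linarith) (by linarith) (by linarith) (by linarith) (by linarith)
      (hγ _ ⟨by linarith, by linarith⟩) (hγ _ ⟨by linarith, by linarith⟩)
  have hlim : ContinuousWithinAt (fun ε => ENNReal.ofReal (dist (γ (s + ε)) (γ (t - ε))))
      (Ioo 0 ((t - s) / 2)) 0 := by
    refine ENNReal.continuous_ofReal.continuousAt.comp_continuousWithinAt (.dist ?_ ?_)
    · refine (hcont s ⟨hs, hst.le.trans ht⟩).comp_of_eq (by fun_prop) (fun ε hε => ?_) (add_zero s)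
      exact ⟨by linarith [hε.1], by linarith [hε.2]⟩
    · refine (hcont t ⟨hs.trans hst.le, ht⟩).comp_of_eq (by fun_prop) (fun ε hε => ?_) (sub_zero t)
      exact ⟨by linarith [hε.2], by linarith [hε.1]⟩
  simpa using hlim.closure_le (by rw [closure_Ioo hδ]; exact left_mem_Icc.2 (by linarith))
    continuousWithinAt_const hshrunk

theorem dist_le_weak_limit_of_partition_measures
    {X : Type*} [MetricSpace X] (γ : ℝ → X)
    (hcont : ContinuousOn γ (Set.Icc (0 : ℝ) 1))
    (L : ℝ)
    (hlen : ∀ (n : ℕ) (t : Fin (n + 1) → ℝ), StrictMono t → t 0 = 0 → t (Fin.last n) = 1 →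
      ∑ i : Fin n, dist (γ (t i.castSucc)) (γ (t i.succ)) ≤ L)
    (ν : Measure ℝ) (φ : ℕ → ℕ) (hφ : StrictMono φ)
    (hweak : ∀ f : BoundedContinuousFunction ℝ ℝ,
      Tendsto (fun k => ∫ x, f x ∂(∑ i : Fin (φ k),
          ENNReal.ofReal (dist (γ ((i : ℝ) / (φ k))) (γ (((i : ℝ) + 1) / (φ k)))) •
            Measure.dirac ((i : ℝ) / (φ k))))
        atTop (nhds (∫ x, f x ∂ν))) :
    ∀ s t : ℝ, 0 ≤ s → s ≤ t → t ≤ 1 →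
      ENNReal.ofReal (dist (γ s) (γ t)) ≤ ν (Set.Icc s t) :=
  dist_le_weak_limit_of_partition_measures_general γ hcont ν φ hφ hweak
end
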